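/- arXiv:2210.04619 — 5 statements merged into one kernel-verified Lean document; each statement's English description precedes it below -/
import Mathlib

section
/- Let n ≥ 5 and define g(s) = -4s³ + 6(n-4)s² - 2(n²-10n+20)s - 2(n-2)(n-4) for real s. Then g(s) > 0 for all s in the open interval ((n-4)/2, n-4), and g(s) < 0 for all s in the open interval (0, (n-4)/2). -/
theorem stmt_1 (n : ℕ) (hn : 5 ≤ n)
    (g : ℝ → ℝ)
    (hg : ∀ s, g s = -4 * s ^ 3 + 6 * ((n : ℝ) - 4) * s ^ 2
      - 2 * ((n : ℝ) ^ 2 - 10 * n + 20) * s - 2 * ((n : ℝ) - 2) * ((n : ℝ) - 4)) :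
    (∀ s ∈ Set.Ioo (((n : ℝ) - 4) / 2) ((n : ℝ) - 4), 0 < g s) ∧
    (∀ s ∈ Set.Ioo (0 : ℝ) (((n : ℝ) - 4) / 2), g s < 0) := by
  have hn' : (5 : ℝ) ≤ (n : ℝ) := by exact_mod_cast hn
  constructor
  · rintro s ⟨h1, h2⟩
    rw [hg]
    have hs0 : 0 < s := lt_of_le_of_lt (by linarith) h1
    nlinarith [mul_pos (show (0:ℝ) < 2*s - ((n:ℝ)-4) by linarith)
      (show (0:ℝ) < s * ((n:ℝ)-4 - s) + ((n:ℝ)-4) + 2 by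
        nlinarith [mul_pos hs0 (show (0:ℝ) < (n:ℝ)-4-s by linarith)])]
  · rintro s ⟨h1, h2⟩
    rw [hg]
    nlinarith [mul_pos (show (0:ℝ) < ((n:ℝ)-4) - 2*s by linarith)
      (show (0:ℝ) < s * ((n:ℝ)-4 - s) + ((n:ℝ)-4) + 2 by
        nlinarith [mul_pos h1 (show (0:ℝ) < (n:ℝ)-4-s by linarith)])]
end

section
/- Let n ≥ 5 and define h(s) = s³ - 2(n-4)s² + (n²-10n+20)s + 2(n-2)(n-4) for real s. Then h(s) > 0 for all s in the open interval (0, n-4). Consequently A₀(s) := s·h(s) > 0 for all s ∈ (0, n-4). -/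
theorem stmt_2 (n : ℕ) (hn : 5 ≤ n)
    (h : ℝ → ℝ)
    (hh : ∀ s, h s = s ^ 3 - 2 * ((n : ℝ) - 4) * s ^ 2
      + ((n : ℝ) ^ 2 - 10 * n + 20) * s + 2 * ((n : ℝ) - 2) * ((n : ℝ) - 4)) :
    (∀ s ∈ Set.Ioo (0 : ℝ) ((n : ℝ) - 4), 0 < h s) ∧
    (∀ s ∈ Set.Ioo (0 : ℝ) ((n : ℝ) - 4), 0 < s * h s) := by
  have hn' : (5 : ℝ) ≤ (n : ℝ) := by exact_mod_cast hn
  have key : ∀ s ∈ Set.Ioo (0 : ℝ) ((n : ℝ) - 4), 0 < h s := by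
    rintro s ⟨hs0, hs1⟩
    rw [hh]
    have h1 : 0 < (n : ℝ) - 4 - s := by linarith
    have h2 : 0 < ((n : ℝ) - 4) * s + 2 * ((n : ℝ) - 2) - s ^ 2 := by
      nlinarith [mul_pos hs0 h1]
    nlinarith [mul_pos h1 h2]
  exact ⟨key, fun s hs => mul_pos hs.1 (key s hs)⟩
end

section
/- Let n ≥ 5, α > -4, and p with (n+α)/(n-4) < p < (n+4+2α)/(n-4). Set B = (4+α)/(p-1), A₃ = -4B + 2n - 8, and A₁ = -4B³ + 6(n-4)B² - 2(n²-10n+20)B - 2(n-2)(n-4). Then A₃ < 0 and A₁ > 0. -/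
theorem stmt_4 (n : ℕ) (hn : 5 ≤ n) (α p : ℝ) (hα : α > -4)
    (hp1 : ((n : ℝ) + α) / (n - 4) < p) (hp2 : p < ((n : ℝ) + 4 + 2 * α) / (n - 4))
    (B A₃ A₁ : ℝ) (hB : B = (4 + α) / (p - 1))
    (hA₃ : A₃ = -4 * B + 2 * n - 8)
    (hA₁ : A₁ = -4 * B ^ 3 + 6 * ((n : ℝ) - 4) * B ^ 2
      - 2 * ((n : ℝ) ^ 2 - 10 * n + 20) * B - 2 * ((n : ℝ) - 2) * ((n : ℝ) - 4)) :
    A₃ < 0 ∧ 0 < A₁ := by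
  have hn5 : (5:ℝ) ≤ n := by exact_mod_cast hn
  have hm : (0:ℝ) < (n:ℝ) - 4 := by linarith
  rw [div_lt_iff₀ hm] at hp1
  rw [lt_div_iff₀ hm] at hp2
  have hα' : (0:ℝ) < 4 + α := by linarith
  have hp : 0 < p - 1 := by nlinarith
  have hBp : B * (p - 1) = 4 + α := by rw [hB]; field_simp
  have hBhi : B < (n:ℝ) - 4 := by nlinarith
  have hBlo : ((n:ℝ) - 4) / 2 < B := by nlinarith
  have hBpos : 0 < B := by nlinarith
  have hq : 0 < -B ^ 2 + ((n:ℝ) - 4) * B + ((n:ℝ) - 2) := by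
    nlinarith [mul_pos hBpos (sub_pos.mpr hBhi)]
  have h1 : 0 < 2 * B - ((n:ℝ) - 4) := by linarith
  constructor
  · linarith
  · have := mul_pos h1 hq
    nlinarith
end

section
/- Let n ≥ 5, α > -4, and p > (n+4+2α)/(n-4) with p > 1. Set B = (4+α)/(p-1), A₃ = -4B + 2n - 8, and A₁ = -4B³ + 6(n-4)B² - 2(n²-10n+20)B - 2(n-2)(n-4). Then A₃ > 0 and A₁ < 0. -/
theorem stmt_5 (n : ℕ) (hn : 5 ≤ n) (α p : ℝ) (hα : α > -4) (hp : p > 1)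
    (hp2 : p > ((n : ℝ) + 4 + 2 * α) / (n - 4))
    (B A₃ A₁ : ℝ) (hB : B = (4 + α) / (p - 1))
    (hA₃ : A₃ = -4 * B + 2 * n - 8)
    (hA₁ : A₁ = -4 * B ^ 3 + 6 * ((n : ℝ) - 4) * B ^ 2
      - 2 * ((n : ℝ) ^ 2 - 10 * n + 20) * B - 2 * ((n : ℝ) - 2) * ((n : ℝ) - 4)) :
    A₃ > 0 ∧ A₁ < 0 := by
  have hn5 : (5 : ℝ) ≤ (n : ℝ) := by exact_mod_cast hn
  have hp1 : p - 1 > 0 := by linarith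
  have hn4 : (n : ℝ) - 4 > 0 := by linarith
  have hBp : B * (p - 1) = 4 + α := by
    rw [hB]; field_simp
  have hB0 : B > 0 := by
    rw [hB]; exact div_pos (by linarith) hp1
  have h2 : ((n : ℝ) + 4 + 2 * α) < p * ((n : ℝ) - 4) := by
    have := (div_lt_iff₀ hn4).mp hp2
    linarith
  have hBlt : 2 * B < (n : ℝ) - 4 := by
    nlinarith [hBp, h2, hp1]
  constructor
  · linarith [hA₃, hBlt]
  · have hBn : B < (n : ℝ) - 4 := by linarith
    have h3 : B * ((n : ℝ) - 4 - B) > 0 := mul_pos hB0 (by linarith)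
    have h4 : (n : ℝ) - 4 - 2 * B > 0 := by linarith
    nlinarith [mul_pos h4 h3, mul_pos h4 (show (n : ℝ) - 2 > 0 by linarith), hA₁]
end

section
/- Let n > 4, -4 < α ≤ 0, and (n+α)/(n-4) < p < (n+4+α)/(n-4) with p ≠ (n+4+2α)/(n-4). Then the constant A₀ := ((4+α)/(p-1))·[((4+α)/(p-1))³ - 2(n-4)((4+α)/(p-1))² + (n²-10n+20)((4+α)/(p-1)) + 2(n-2)(n-4)] is strictly positive, so A₀^{1/(p-1)} is a well-defined positive real number. -/
theorem stmt_18 (n : ℤ) (hn : 4 < n) (α p : ℝ) (hα1 : -4 < α) (hα2 : α ≤ 0)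
    (hp1 : ((n : ℝ) + α) / (n - 4) < p) (hp2 : p < ((n : ℝ) + 4 + α) / (n - 4))
    (hp3 : p ≠ ((n : ℝ) + 4 + 2 * α) / (n - 4))
    (A₀ : ℝ)
    (hA₀ : A₀ = ((4 + α) / (p - 1)) * (((4 + α) / (p - 1)) ^ 3
      - 2 * ((n : ℝ) - 4) * ((4 + α) / (p - 1)) ^ 2
      + ((n : ℝ) ^ 2 - 10 * n + 20) * ((4 + α) / (p - 1))
      + 2 * ((n : ℝ) - 2) * ((n : ℝ) - 4))) :
    0 < A₀ ∧ 0 < A₀ ^ (1 / (p - 1) : ℝ) := by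
  have hnr : (4:ℝ) < (n:ℝ) := by exact_mod_cast hn
  have h1 : (0:ℝ) < (n:ℝ) - 4 := by linarith
  have hna : (n:ℝ) + α < p * ((n:ℝ) - 4) := (div_lt_iff₀ h1).mp hp1
  have hp0 : 0 < p - 1 := by nlinarith
  set m := (4 + α) / (p - 1) with hm
  have hm0 : 0 < m := div_pos (by linarith) hp0
  have hmlt : m < (n:ℝ) - 4 := by
    rw [hm, div_lt_iff₀ hp0]
    nlinarith
  have hEq : A₀ = m * (m + 2) * (((n:ℝ) - 4) - m) * (((n:ℝ) - 2) - m) := by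
    rw [hA₀]; ring
  have hpos : 0 < A₀ := by
    rw [hEq]
    have h3 : (0:ℝ) < ((n:ℝ) - 2) - m := by linarith
    have h4 : (0:ℝ) < ((n:ℝ) - 4) - m := by linarith
    have h5 : (0:ℝ) < m + 2 := by linarith
    exact mul_pos (mul_pos (mul_pos hm0 h5) h4) h3
  exact ⟨hpos, Real.rpow_pos_of_pos hpos _⟩
end
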